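/- arXiv:1502.01377 — 2 statements merged into one kernel-verified Lean document; each statement's English description precedes it below -/
import Mathlib

section
/- The Dirichlet inverse of the sequence a_n = (-1)^n (n ≥ 1) is the sequence b_n given by b_n = -μ(n) if n is odd, and b_n = -2^{m-1}·μ(s) if n = 2^m·s with s odd and m ≥ 1, where μ is the Möbius function. -/
open Finset ArithmeticFunction

private def Af : ArithmeticFunction ℤ :=
  ⟨fun n => if n = 0 then 0 else (-1) ^ (n + 1), by simp⟩

private def Bf : ArithmeticFunction ℤ :=
  ⟨fun n => if n = 0 then 0 else
      (2 : ℤ) ^ (n.factorization 2 - 1) * moebius (n / 2 ^ n.factorization 2), by simp⟩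

private lemma Af_apply {n : ℕ} (hn : n ≠ 0) : Af n = (-1) ^ (n + 1) := if_neg hn

private lemma Bf_apply {n : ℕ} (hn : n ≠ 0) :
    Bf n = (2 : ℤ) ^ (n.factorization 2 - 1) * moebius (n / 2 ^ n.factorization 2) := if_neg hn

private lemma Af_mult : Af.IsMultiplicative := by
  rw [ArithmeticFunction.IsMultiplicative.iff_ne_zero]
  refine ⟨by simp [Af_apply], ?_⟩
  intro m n hm hn hmn
  rw [Af_apply (Nat.mul_ne_zero hm hn), Af_apply hm, Af_apply hn, ← pow_add]
  have hnb : ¬ (2 ∣ m ∧ 2 ∣ n) := by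
    rintro ⟨h1, h2⟩
    exact absurd (Nat.eq_one_of_dvd_coprimes hmn h1 h2) (by norm_num)
  rcases Nat.even_or_odd m with hme | hmo
  · have hno : Odd n := by
      rcases Nat.even_or_odd n with h | h
      · exact absurd ⟨hme.two_dvd, h.two_dvd⟩ hnb
      · exact h
    have h1 : Odd (m * n + 1) := (hme.mul_right n).add_one
    have h2 : Odd (m + 1 + (n + 1)) := by
      rcases hme with ⟨k, hk⟩; rcases hno with ⟨l, hl⟩
      exact ⟨k + l + 1, by omega⟩
    rw [h1.neg_one_pow, h2.neg_one_pow]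
  · rcases Nat.even_or_odd n with hne | hno
    · have h1 : Odd (m * n + 1) := (hne.mul_left m).add_one
      have h2 : Odd (m + 1 + (n + 1)) := by
        rcases hmo with ⟨k, hk⟩; rcases hne with ⟨l, hl⟩
        exact ⟨k + l + 1, by omega⟩
      rw [h1.neg_one_pow, h2.neg_one_pow]
    · have h1 : Even (m * n + 1) := by
        rcases hmo with ⟨k, hk⟩; rcases hno with ⟨l, hl⟩
        exact ⟨2*k*l + k + l + 1, by subst hk hl; ring⟩
      have h2 : Even (m + 1 + (n + 1)) := by
        rcases hmo with ⟨k, hk⟩; rcases hno with ⟨l, hl⟩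
        exact ⟨k + l + 2, by omega⟩
      rw [h1.neg_one_pow, h2.neg_one_pow]

private lemma Bf_mult : Bf.IsMultiplicative := by
  rw [ArithmeticFunction.IsMultiplicative.iff_ne_zero]
  refine ⟨by simp [Bf_apply], ?_⟩
  intro m n hm hn hmn
  rw [Bf_apply (Nat.mul_ne_zero hm hn), Bf_apply hm, Bf_apply hn]
  have hfac : (m * n).factorization 2 = m.factorization 2 + n.factorization 2 := by
    rw [Nat.factorization_mul hm hn]; rfl
  have hoc : (m * n) / 2 ^ ((m * n).factorization 2)
      = (m / 2 ^ m.factorization 2) * (n / 2 ^ n.factorization 2) := by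
    rw [hfac, pow_add, Nat.div_mul_div_comm (Nat.ordProj_dvd m 2) (Nat.ordProj_dvd n 2)]
  have hcop : (m / 2 ^ m.factorization 2).Coprime (n / 2 ^ n.factorization 2) :=
    Nat.Coprime.coprime_dvd_left (Nat.ordCompl_dvd m 2)
      (Nat.Coprime.coprime_dvd_right (Nat.ordCompl_dvd n 2) hmn)
  have hmu := isMultiplicative_moebius.map_mul_of_coprime hcop
  have hzero : m.factorization 2 = 0 ∨ n.factorization 2 = 0 := by
    by_contra h
    push_neg at h
    have h1 : 2 ∣ m := Nat.dvd_of_factorization_pos h.1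
    have h2 : 2 ∣ n := Nat.dvd_of_factorization_pos h.2
    exact absurd (Nat.eq_one_of_dvd_coprimes hmn h1 h2) (by norm_num)
  have hpow : (2 : ℤ) ^ ((m * n).factorization 2 - 1)
      = 2 ^ (m.factorization 2 - 1) * 2 ^ (n.factorization 2 - 1) := by
    rw [hfac]
    rcases hzero with h | h <;> rw [h] <;> simp
  rw [hoc, hmu, hpow]
  ring

private lemma geom_pred (k : ℕ) (hk : 1 ≤ k) :
    ∑ j ∈ range k, (2 : ℤ) ^ (j - 1) = 2 ^ (k - 1) := by
  induction k, hk using Nat.le_induction with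
  | base => simp
  | succ k hk ih =>
    rw [Finset.sum_range_succ, ih]
    have h2 : (2:ℤ) ^ (k - 1) + 2 ^ (k - 1) = 2 ^ k := by
      rw [← two_mul, ← pow_succ']
      congr 1
      omega
    simpa using h2

private lemma AB_eq_one : Af * Bf = 1 := by
  rw [ArithmeticFunction.IsMultiplicative.eq_iff_eq_on_prime_powers _ (Af_mult.mul Bf_mult) 1 isMultiplicative_one]
  intro p k hp
  rw [ArithmeticFunction.mul_apply, Nat.sum_divisorsAntidiagonal (fun d e => Af d * Bf e),
    Nat.sum_divisors_prime_pow hp, ArithmeticFunction.one_apply]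
  have hdiv : ∀ x ∈ range (k + 1), Af (p ^ x) * Bf (p ^ k / p ^ x)
      = Af (p ^ x) * Bf (p ^ (k - x)) := by
    intro x hx
    rw [Nat.pow_div (by simpa [Nat.lt_succ_iff] using hx) hp.pos]
  rw [Finset.sum_congr rfl hdiv]
  by_cases hp2 : p = 2
  · subst hp2
    have hB : ∀ j : ℕ, Bf (2 ^ j) = 2 ^ (j - 1) := by
      intro j
      rw [Bf_apply (pow_ne_zero j two_ne_zero)]
      rw [Nat.Prime.factorization_pow Nat.prime_two]
      simp
    have hA : ∀ i : ℕ, Af (2 ^ i) = if i = 0 then 1 else -1 := by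
      intro i
      rw [Af_apply (pow_ne_zero i two_ne_zero)]
      rcases Nat.eq_zero_or_pos i with rfl | hi
      · norm_num
      · rw [if_neg hi.ne']
        have : Odd (2 ^ i + 1) := by
          refine ⟨2 ^ (i - 1), ?_⟩
          have : 2 ^ i = 2 * 2 ^ (i - 1) := by
            rw [← pow_succ']
            congr 1
            omega
          omega
        rw [this.neg_one_pow]
    rcases Nat.eq_zero_or_pos k with rfl | hk
    · simp [Af_mult.map_one, Bf_mult.map_one]
    · rw [if_neg (Nat.one_lt_two_pow (by omega)).ne']
      rw [Finset.sum_range_succ']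
      simp only [hA, hB]
      have hre : ∑ i ∈ range k, (if i + 1 = 0 then (1:ℤ) else -1) * 2 ^ (k - (i + 1) - 1)
          = ∑ j ∈ range k, -((2:ℤ) ^ (j - 1)) := by
        rw [← Finset.sum_range_reflect (fun j => -((2:ℤ) ^ (j - 1))) k]
        refine Finset.sum_congr rfl fun i hi => ?_
        rw [if_neg (Nat.succ_ne_zero i), neg_one_mul]
        have he : k - (i + 1) - 1 = k - 1 - i - 1 := by omega
        rw [he]
      rw [hre, Finset.sum_neg_distrib, geom_pred k hk]
      simp
  · -- p odd
    have hA : ∀ i : ℕ, Af (p ^ i) = 1 := by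
      intro i
      rw [Af_apply (pow_ne_zero i hp.pos.ne')]
      have ho : Odd (p ^ i) := (hp.odd_of_ne_two hp2).pow
      rw [ho.add_one.neg_one_pow]
    have hB : ∀ j : ℕ, Bf (p ^ j) = moebius (p ^ j) := by
      intro j
      rw [Bf_apply (pow_ne_zero _ hp.pos.ne')]
      have hf0 : (p ^ j).factorization 2 = 0 := by
        rw [hp.factorization_pow]
        simp [Finsupp.single_apply, hp2]
      rw [hf0]
      simp
    simp only [hA, hB, one_mul]
    have hrefl : ∑ i ∈ range (k + 1), (moebius (p ^ (k - i)) : ℤ)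
        = ∑ j ∈ range (k + 1), (moebius (p ^ j) : ℤ) := by
      rw [← Finset.sum_range_reflect]
      refine Finset.sum_congr rfl fun i hi => ?_
      rw [mem_range, Nat.lt_succ_iff] at hi
      have he : k + 1 - 1 - i = k - i := by omega
      have he2 : k - (k - i) = i := by omega
      rw [he, he2]
    rw [hrefl, ← Nat.sum_divisors_prime_pow hp, ← coe_mul_zeta_apply,
      moebius_mul_coe_zeta, ArithmeticFunction.one_apply]

theorem stmt6 (b : ℕ → ℤ)
    (hodd : ∀ n, Odd n → b n = -ArithmeticFunction.moebius n)
    (heven : ∀ m s : ℕ, 1 ≤ m → Odd s →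
      b (2 ^ m * s) = -(2 ^ (m - 1)) * ArithmeticFunction.moebius s) :
    ∀ n, 1 ≤ n →
      (∑ d ∈ n.divisors, (-1 : ℤ) ^ d * b (n / d)) = if n = 1 then 1 else 0 := by
  have hb : ∀ n : ℕ, n ≠ 0 → b n = -(Bf n) := by
    intro n hn
    rw [Bf_apply hn]
    rcases Nat.eq_zero_or_pos (n.factorization 2) with h0 | h1
    · have h2 : ¬ 2 ∣ n := by
        intro hd
        have := Nat.Prime.factorization_pos_of_dvd Nat.prime_two hn hd
        omega
      have hno : Odd n := Nat.odd_iff.mpr (Nat.two_dvd_ne_zero.mp h2)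
      rw [h0, hodd n hno]
      simp
    · have hs : Odd (n / 2 ^ n.factorization 2) :=
        Nat.odd_iff.mpr (Nat.two_dvd_ne_zero.mp (Nat.not_dvd_ordCompl Nat.prime_two hn))
      have hn2 : n = 2 ^ n.factorization 2 * (n / 2 ^ n.factorization 2) :=
        (Nat.ordProj_mul_ordCompl_eq_self n 2).symm
      rw [show b n = b (2 ^ n.factorization 2 * (n / 2 ^ n.factorization 2)) by rw [← hn2],
        heven _ _ h1 hs]
      ring
  intro n hn
  have hn0 : n ≠ 0 := by omega
  have key : ∀ d ∈ n.divisors, (-1 : ℤ) ^ d * b (n / d) = Af d * Bf (n / d) := by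
    intro d hd
    rw [Nat.mem_divisors] at hd
    have hd0 : d ≠ 0 := by rintro rfl; exact hn0 (Nat.eq_zero_of_zero_dvd hd.1)
    have hnd0 : n / d ≠ 0 :=
      (Nat.div_pos (Nat.le_of_dvd (Nat.pos_of_ne_zero hn0) hd.1) (Nat.pos_of_ne_zero hd0)).ne'
    rw [hb _ hnd0, Af_apply hd0, pow_succ]
    ring
  rw [Finset.sum_congr rfl key, ← Nat.sum_divisorsAntidiagonal (fun d e => Af d * Bf e),
    ← ArithmeticFunction.mul_apply, AB_eq_one, ArithmeticFunction.one_apply]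
end

section
/- Let N be a positive integer and v : {0,...,N-1} → ℝ a signal with zero mean, i.e., Σ_{n=0}^{N-1} v_n = 0, and let V be its DCT-II spectrum. Define the ACT averages S_k = (1/k)·Σ_{m=0}^{k-1} v_{2mN/k - 1/2} for k = 1,...,N-1, where v_r for real r denotes the extension v_r = √(2/N)·Σ_{j=0}^{N-1} α_j·V_j·cos(π j (r+1/2)/N). Then S_k = √(2/N)·Σ_{s=1}^{⌊(N-1)/k⌋} V_{sk} for each k = 1,...,N-1. -/
open Real Finset

theorem cos_sum_aux (k j : ℕ) (hk : 0 < k) :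
    ∑ m ∈ range k, Real.cos (2 * π * j * m / k) = if k ∣ j then (k : ℝ) else 0 := by
  have hk0 : (k : ℝ) ≠ 0 := Nat.cast_ne_zero.mpr hk.ne'
  by_cases hkj : k ∣ j
  · rw [if_pos hkj]
    obtain ⟨t, rfl⟩ := hkj
    have : ∀ m ∈ range k, Real.cos (2 * π * (k * t : ℕ) * m / k) = 1 := by
      intro m _
      have : (2 * π * (k * t : ℕ) * m / k : ℝ) = (t * m : ℕ) * (2 * π) := by
        push_cast; field_simp
      rw [this, Real.cos_nat_mul_two_pi]
    rw [Finset.sum_congr rfl this]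
    simp
  · rw [if_neg hkj]
    set ζ : ℂ := Complex.exp ((2 * π * j / k : ℝ) * Complex.I) with hζ
    have hζk : ζ ^ k = 1 := by
      rw [hζ, ← Complex.exp_nat_mul]
      have : (k : ℂ) * ((2 * π * j / k : ℝ) * Complex.I) = (j : ℤ) * (2 * π * Complex.I) := by
        have hk0' : (k : ℂ) ≠ 0 := Nat.cast_ne_zero.mpr hk.ne'
        push_cast; field_simp
      rw [this, Complex.exp_int_mul_two_pi_mul_I]
    have hζ1 : ζ ≠ 1 := by
      intro h
      rw [hζ, Complex.exp_eq_one_iff] at h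
      obtain ⟨n, hn⟩ := h
      have hn' : ((2 * π * j / k : ℝ) : ℂ) * Complex.I = ((n : ℂ) * (2 * π)) * Complex.I := by
        rw [hn]; ring
      have hI : ((2 * π * j / k : ℝ) : ℂ) = (n : ℂ) * (2 * π) :=
        mul_right_cancel₀ Complex.I_ne_zero hn'
      have hr : (2 * π * j / k : ℝ) = (n : ℝ) * (2 * π) := by
        exact_mod_cast hI
      have hj : (j : ℝ) = (n : ℝ) * k := by
        field_simp at hr
        nlinarith [Real.pi_pos, hr]
      have : (j : ℤ) = n * k := by exact_mod_cast hj
      exact hkj (Int.natCast_dvd_natCast.mp ⟨n, by rw [this]; ring⟩)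
    have hsum : ∑ m ∈ range k, ζ ^ m = 0 := by
      rw [geom_sum_eq hζ1, hζk, sub_self, zero_div]
    have : ∀ m ∈ range k, Real.cos (2 * π * j * m / k) = (ζ ^ m).re := by
      intro m _
      rw [hζ, ← Complex.exp_nat_mul]
      rw [show (m : ℂ) * ((2 * π * j / k : ℝ) * Complex.I) = ((2 * π * j * m / k : ℝ) : ℂ) * Complex.I by push_cast; ring]
      rw [Complex.exp_ofReal_mul_I_re]
    rw [Finset.sum_congr rfl this, ← Complex.re_sum, hsum, Complex.zero_re]

theorem stmt16 (N : ℕ) (hN : 0 < N) (v α V : ℕ → ℝ) (vext : ℝ → ℝ)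
    (hα : ∀ k, α k = if k = 0 then 1 / Real.sqrt 2 else 1)
    (hV : ∀ k, V k = Real.sqrt (2 / (N : ℝ)) * α k *
      ∑ n ∈ Finset.range N, v n * Real.cos (π * (k : ℝ) * ((n : ℝ) + 1 / 2) / (N : ℝ)))
    (hmean : ∑ n ∈ Finset.range N, v n = 0)
    (hvext : ∀ r : ℝ, vext r = Real.sqrt (2 / (N : ℝ)) *
      ∑ j ∈ Finset.range N, α j * V j * Real.cos (π * (j : ℝ) * (r + 1 / 2) / (N : ℝ)))
    (k : ℕ) (hk1 : 1 ≤ k) (hk2 : k ≤ N - 1) :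
    (1 / (k : ℝ)) *
        ∑ m ∈ Finset.range k, vext (2 * (m : ℝ) * (N : ℝ) / (k : ℝ) - 1 / 2) =
      Real.sqrt (2 / (N : ℝ)) * ∑ s ∈ Finset.Icc 1 ((N - 1) / k), V (s * k) := by
  have hkpos : 0 < k := hk1
  have hk0 : (k : ℝ) ≠ 0 := Nat.cast_ne_zero.mpr hkpos.ne'
  have hN0 : (N : ℝ) ≠ 0 := Nat.cast_ne_zero.mpr hN.ne'
  have hV0 : V 0 = 0 := by
    rw [hV 0]
    have h1 : ∀ n ∈ range N, v n * Real.cos (π * ((0:ℕ) : ℝ) * ((n : ℝ) + 1 / 2) / (N : ℝ)) = v n := by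
      intro n _; norm_num
    rw [Finset.sum_congr rfl h1, hmean, mul_zero]
  have key : ∀ m ∈ range k, vext (2 * (m : ℝ) * N / k - 1 / 2)
      = Real.sqrt (2 / (N : ℝ)) * ∑ j ∈ range N, α j * V j * Real.cos (2 * π * j * m / k) := by
    intro m _
    rw [hvext]
    congr 1
    apply Finset.sum_congr rfl
    intro j _
    congr 1
    congr 1
    field_simp
    ring
  rw [Finset.sum_congr rfl key, ← Finset.mul_sum, Finset.sum_comm]
  have key2 : ∀ j ∈ range N, ∑ m ∈ range k, α j * V j * Real.cos (2 * π * j * m / k)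
      = if k ∣ j then α j * V j * k else 0 := by
    intro j _
    rw [← Finset.mul_sum, cos_sum_aux k j hkpos]
    split <;> simp
  rw [Finset.sum_congr rfl key2, ← Finset.sum_filter]
  have hfilter : Finset.filter (fun j => k ∣ j) (Finset.range N)
      = Finset.image (fun s => s * k) (Finset.range ((N - 1) / k + 1)) := by
    ext j
    simp only [Finset.mem_filter, Finset.mem_range, Finset.mem_image]
    constructor
    · rintro ⟨hjN, s, rfl⟩
      refine ⟨s, ?_, mul_comm s k⟩
      have : s ≤ (N - 1) / k := (Nat.le_div_iff_mul_le hkpos).mpr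
        (by rw [mul_comm]; omega)
      omega
    · rintro ⟨s, hs, rfl⟩
      have hs' : s ≤ (N - 1) / k := by omega
      have h2 : s * k ≤ N - 1 := (Nat.le_div_iff_mul_le hkpos).mp hs'
      exact ⟨by omega, s, mul_comm s k⟩
  rw [hfilter, Finset.sum_image (fun a _ b _ h => Nat.eq_of_mul_eq_mul_right hkpos h)]
  rw [Finset.sum_range_succ']
  have hα1 : ∀ s, α ((s + 1) * k) * V ((s + 1) * k) * k = V ((s + 1) * k) * k := by
    intro s
    rw [hα]
    have : (s + 1) * k ≠ 0 := by positivity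
    simp [this]
  simp only [hα1, Nat.zero_mul, hV0, mul_zero, zero_mul, add_zero]
  rw [show Finset.Icc 1 ((N - 1) / k) = Finset.Ico 1 ((N - 1) / k + 1) from (Finset.Ico_add_one_right_eq_Icc 1 _).symm,
    Finset.sum_Ico_eq_sum_range]
  simp only [Nat.add_sub_cancel]
  have : ∑ i ∈ range ((N - 1) / k), V ((i + 1) * k) * k
      = (∑ i ∈ range ((N - 1) / k), V ((1 + i) * k)) * k := by
    rw [Finset.sum_mul]
    apply Finset.sum_congr rfl
    intro i _
    rw [add_comm 1 i]
  rw [this]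
  field_simp
end
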